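/- Let b : U → ℝ be smooth with b(p) ≠ 0 and b(p) ≠ 1 for every p ∈ U. Consider the Samuelson system for smooth functions σ₁, σ₂, τ₁ : U → ℝ: (E1) f_x·∂σ₁/∂y + f_{xy} = 0; (E2) f_y·∂σ₂/∂x + f_{xy} = 0; (E3) f_y·∂τ₁/∂x − f_x·∂τ₁/∂y = 0; (E4) b·f_y·∂σ₁/∂x + (b−1)·f_x·∂τ₁/∂y + f_x·∂σ₂/∂y + 2b·f_{xy} + b_x·f_y = 0. Then the solutions of the associated homogeneous system (obtained by replacing (E1), (E2), (E4) with f_x·∂σ₁/∂y = 0, f_y·∂σ₂/∂x = 0, and b·f_y·∂σ₁/∂x + (b−1)·f_x·∂τ₁/∂y + f_x·∂σ₂/∂y = 0) form a real vector space of dimension at most 6; consequently the solution set of (E1)–(E4), if nonempty, is an affine subspace of C^∞(U)³ of dimension at most 6 (i.e., the rank of the Samuelson web does not exceed 6). -/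

import Mathlib

/-!
For a solution of the homogeneous system, (E1) and (E2) say that `σ₁` depends on `x` only and
`σ₂` on `y` only; write `u = ∂ₓσ₁` and `v = ∂ᵧσ₂`. Then (E3) and (E4) give `∂ₓτ₁` and `∂ᵧτ₁`
algebraically in terms of `u` and `v`, and the symmetry `∂ᵧ∂ₓτ₁ = ∂ₓ∂ᵧτ₁` turns into a single
linear relation
`-b (b - 1) f_x f_y³ ∂ₓu + (b - 1) f_x³ f_y ∂ᵧv + c₁ u + c₂ v = 0`
whose two leading coefficients vanish nowhere. On the line `y = y₀` it is a linear ODE for `u`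
once `v(y₀)` and `∂ᵧv(y₀)` are known; once `u` is known it is a linear ODE for `v` on `x = x₀`.
So a solution is determined on `U` by the six numbers `σ₁, σ₂, τ₁, u, v, ∂ᵧv` at one point.
-/

open Set

/-- Partial derivative with respect to the first variable. -/
noncomputable def pdx (g : ℝ × ℝ → ℝ) (p : ℝ × ℝ) : ℝ :=
  deriv (fun x => g (x, p.2)) p.1

/-- Partial derivative with respect to the second variable. -/
noncomputable def pdy (g : ℝ × ℝ → ℝ) (p : ℝ × ℝ) : ℝ :=
  deriv (fun y => g (p.1, y)) p.2

/-- The web function `H = f_{xy} / (f_x f_y)`. -/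
noncomputable def Hf (f : ℝ × ℝ → ℝ) (p : ℝ × ℝ) : ℝ :=
  pdy (pdx f) p / (pdx f p * pdy f p)

open Filter Topology
open scoped ContDiff

section PartialDerivatives

variable {g h : ℝ × ℝ → ℝ} {p : ℝ × ℝ}

theorem DifferentiableAt.hasDerivAt_pdx (hg : DifferentiableAt ℝ g p) :
    HasDerivAt (fun x => g (x, p.2)) (pdx g p) p.1 :=
  (hg.comp (x := p.1) (f := fun x => (x, p.2))
    (differentiableAt_id.prodMk (differentiableAt_const _))).hasDerivAt

theorem DifferentiableAt.hasDerivAt_pdy (hg : DifferentiableAt ℝ g p) :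
    HasDerivAt (fun y => g (p.1, y)) (pdy g p) p.2 :=
  (hg.comp (x := p.2) (f := fun y => (p.1, y))
    ((differentiableAt_const _).prodMk differentiableAt_id)).hasDerivAt

theorem DifferentiableAt.pdx_eq_fderiv (hg : DifferentiableAt ℝ g p) :
    pdx g p = fderiv ℝ g p (1, 0) :=
  (hg.hasFDerivAt.comp_hasDerivAt (x := p.1) (f := fun x => (x, p.2))
    ((hasDerivAt_id _).prodMk (hasDerivAt_const _ _))).deriv

theorem DifferentiableAt.pdy_eq_fderiv (hg : DifferentiableAt ℝ g p) :
    pdy g p = fderiv ℝ g p (0, 1) :=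
  (hg.hasFDerivAt.comp_hasDerivAt (x := p.2) (f := fun y => (p.1, y))
    ((hasDerivAt_const _ _).prodMk (hasDerivAt_id _))).deriv

theorem Filter.EventuallyEq.pdx_eq (hgh : g =ᶠ[𝓝 p] h) : pdx g p = pdx h p :=
  (hgh.comp_tendsto ((continuous_id.prodMk continuous_const).tendsto' p.1 p rfl)).deriv_eq

theorem Filter.EventuallyEq.pdy_eq (hgh : g =ᶠ[𝓝 p] h) : pdy g p = pdy h p :=
  (hgh.comp_tendsto ((continuous_const.prodMk continuous_id).tendsto' p.2 p rfl)).deriv_eq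

theorem pdx_add (hg : DifferentiableAt ℝ g p) (hh : DifferentiableAt ℝ h p) :
    pdx (g + h) p = pdx g p + pdx h p :=
  (hg.hasDerivAt_pdx.add hh.hasDerivAt_pdx).deriv

theorem pdy_add (hg : DifferentiableAt ℝ g p) (hh : DifferentiableAt ℝ h p) :
    pdy (g + h) p = pdy g p + pdy h p :=
  (hg.hasDerivAt_pdy.add hh.hasDerivAt_pdy).deriv

theorem pdx_sub (hg : DifferentiableAt ℝ g p) (hh : DifferentiableAt ℝ h p) :
    pdx (g - h) p = pdx g p - pdx h p :=
  (hg.hasDerivAt_pdx.sub hh.hasDerivAt_pdx).deriv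

theorem pdy_sub (hg : DifferentiableAt ℝ g p) (hh : DifferentiableAt ℝ h p) :
    pdy (g - h) p = pdy g p - pdy h p :=
  (hg.hasDerivAt_pdy.sub hh.hasDerivAt_pdy).deriv

theorem pdx_mul (hg : DifferentiableAt ℝ g p) (hh : DifferentiableAt ℝ h p) :
    pdx (g * h) p = pdx g p * h p + g p * pdx h p :=
  (hg.hasDerivAt_pdx.mul hh.hasDerivAt_pdx).deriv

theorem pdy_mul (hg : DifferentiableAt ℝ g p) (hh : DifferentiableAt ℝ h p) :
    pdy (g * h) p = pdy g p * h p + g p * pdy h p :=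
  (hg.hasDerivAt_pdy.mul hh.hasDerivAt_pdy).deriv

theorem pdx_const_smul (hg : DifferentiableAt ℝ g p) (c : ℝ) : pdx (c • g) p = c * pdx g p :=
  (hg.hasDerivAt_pdx.const_mul c).deriv

theorem pdy_const_smul (hg : DifferentiableAt ℝ g p) (c : ℝ) : pdy (c • g) p = c * pdy g p :=
  (hg.hasDerivAt_pdy.const_mul c).deriv

theorem pdx_const (c : ℝ) : pdx (fun _ => c) p = 0 := deriv_const _ _

theorem pdy_const (c : ℝ) : pdy (fun _ => c) p = 0 := deriv_const _ _

theorem ContDiffAt.eventually_differentiableAt (hg : ContDiffAt ℝ ∞ g p) :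
    ∀ᶠ q in 𝓝 p, DifferentiableAt ℝ g q :=
  ((hg.of_le (by simp) : ContDiffAt ℝ 1 g p).eventually (by simp)).mono
    fun _ hq => hq.differentiableAt one_ne_zero

theorem ContDiffAt.pdx_eventuallyEq (hg : ContDiffAt ℝ ∞ g p) :
    pdx g =ᶠ[𝓝 p] fun q => fderiv ℝ g q (1, 0) :=
  hg.eventually_differentiableAt.mono fun _ hq => hq.pdx_eq_fderiv

theorem ContDiffAt.pdy_eventuallyEq (hg : ContDiffAt ℝ ∞ g p) :
    pdy g =ᶠ[𝓝 p] fun q => fderiv ℝ g q (0, 1) :=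
  hg.eventually_differentiableAt.mono fun _ hq => hq.pdy_eq_fderiv

theorem ContDiffAt.pdx (hg : ContDiffAt ℝ ∞ g p) : ContDiffAt ℝ ∞ (pdx g) p :=
  ((ContinuousLinearMap.apply ℝ ℝ ((1 : ℝ), (0 : ℝ))).contDiff.contDiffAt.comp p
    (hg.fderiv_right le_rfl)).congr_of_eventuallyEq hg.pdx_eventuallyEq

theorem ContDiffAt.pdy (hg : ContDiffAt ℝ ∞ g p) : ContDiffAt ℝ ∞ (pdy g) p :=
  ((ContinuousLinearMap.apply ℝ ℝ ((0 : ℝ), (1 : ℝ))).contDiff.contDiffAt.comp p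
    (hg.fderiv_right le_rfl)).congr_of_eventuallyEq hg.pdy_eventuallyEq

theorem pdy_pdx_comm (hg : ContDiffAt ℝ ∞ g p) : pdy (pdx g) p = pdx (pdy g) p := by
  have hg' : DifferentiableAt ℝ (fderiv ℝ g) p :=
    (hg.fderiv_right (m := ∞) le_rfl).differentiableAt (by simp)
  have happly (v : ℝ × ℝ) : HasFDerivAt (fun q => fderiv ℝ g q v)
      ((ContinuousLinearMap.apply ℝ ℝ v).comp (fderiv ℝ (fderiv ℝ g) p)) p :=
    (ContinuousLinearMap.apply ℝ ℝ v).hasFDerivAt.comp p hg'.hasFDerivAt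
  rw [hg.pdx_eventuallyEq.pdy_eq, hg.pdy_eventuallyEq.pdx_eq,
    (happly _).differentiableAt.pdy_eq_fderiv, (happly _).differentiableAt.pdx_eq_fderiv,
    (happly _).fderiv, (happly _).fderiv]
  exact hg.isSymmSndFDerivAt (by simpa using ENat.LEInfty.out) _ _

theorem pdy_pdy_add (hg : ContDiffAt ℝ ∞ g p) (hh : ContDiffAt ℝ ∞ h p) :
    pdy (pdy (g + h)) p = pdy (pdy g) p + pdy (pdy h) p := by
  have : pdy (g + h) =ᶠ[𝓝 p] pdy g + pdy h :=
    (hg.eventually_differentiableAt.and hh.eventually_differentiableAt).mono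
      fun _ hq => pdy_add hq.1 hq.2
  rw [this.pdy_eq, pdy_add (hg.pdy.differentiableAt (by simp)) (hh.pdy.differentiableAt (by simp))]

theorem pdy_pdy_const_smul (hg : ContDiffAt ℝ ∞ g p) (c : ℝ) :
    pdy (pdy (c • g)) p = c * pdy (pdy g) p := by
  have : pdy (c • g) =ᶠ[𝓝 p] c • pdy g :=
    hg.eventually_differentiableAt.mono fun _ hq => pdy_const_smul hq c
  rw [this.pdy_eq, pdy_const_smul (hg.pdy.differentiableAt (by simp))]

end PartialDerivatives

section Constancy

variable {g : ℝ × ℝ → ℝ} {U : Set (ℝ × ℝ)} {p : ℝ × ℝ}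

theorem pdx_eq_zero_of_eqOn_zero (hU : IsOpen U) (h : EqOn g 0 U) (hp : p ∈ U) : pdx g p = 0 :=
  (h.eventuallyEq_of_mem (hU.mem_nhds hp)).pdx_eq.trans (pdx_const 0)

theorem pdy_eq_zero_of_eqOn_zero (hU : IsOpen U) (h : EqOn g 0 U) (hp : p ∈ U) : pdy g p = 0 :=
  (h.eventuallyEq_of_mem (hU.mem_nhds hp)).pdy_eq.trans (pdy_const 0)

theorem eq_of_pdx_eq_zero {I : Set ℝ} (hI : IsOpen I) (hIc : I.OrdConnected) {y : ℝ}
    (hg : ∀ x ∈ I, DifferentiableAt ℝ g (x, y)) (h0 : ∀ x ∈ I, pdx g (x, y) = 0)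
    {x x' : ℝ} (hx : x ∈ I) (hx' : x' ∈ I) : g (x, y) = g (x', y) :=
  hI.is_const_of_deriv_eq_zero (f := fun t => g (t, y)) hIc.isPreconnected
    (fun t ht => (hg t ht).hasDerivAt_pdx.differentiableAt.differentiableWithinAt)
    (fun t ht => h0 t ht) hx hx'

theorem eq_of_pdy_eq_zero {J : Set ℝ} (hJ : IsOpen J) (hJc : J.OrdConnected) {x : ℝ}
    (hg : ∀ y ∈ J, DifferentiableAt ℝ g (x, y)) (h0 : ∀ y ∈ J, pdy g (x, y) = 0)
    {y y' : ℝ} (hy : y ∈ J) (hy' : y' ∈ J) : g (x, y) = g (x, y') :=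
  hJ.is_const_of_deriv_eq_zero (f := fun t => g (x, t)) hJc.isPreconnected
    (fun t ht => (hg t ht).hasDerivAt_pdy.differentiableAt.differentiableWithinAt)
    (fun t ht => h0 t ht) hy hy'

end Constancy

theorem eqOn_zero_of_hasDerivAt_mul {K : Set ℝ} (hK : IsOpen K) (hKc : K.OrdConnected)
    {α u : ℝ → ℝ} (hα : ContinuousOn α K) (hu : ∀ x ∈ K, HasDerivAt u (α x * u x) x)
    {x₀ : ℝ} (hx₀ : x₀ ∈ K) (h0 : u x₀ = 0) : EqOn u 0 K := by
  set A : ℝ → ℝ := fun x => ∫ t in x₀..x, α t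
  have hA : ∀ x ∈ K, HasDerivAt A (α x) x := fun x hx =>
    intervalIntegral.integral_hasDerivAt_right
      ((hα.mono (hKc.uIcc_subset hx₀ hx)).intervalIntegrable)
      (ContinuousAt.stronglyMeasurableAtFilter hK
        (fun y hy => hα.continuousAt (hK.mem_nhds hy)) x hx)
      (hα.continuousAt (hK.mem_nhds hx))
  have hconst : ∀ x ∈ K, HasDerivAt (fun x => u x * Real.exp (-A x)) 0 x := fun x hx =>
    ((hu x hx).mul (hA x hx).neg.exp).congr_deriv (by simp only [Pi.neg_apply]; ring)
  intro x hx
  have := hK.is_const_of_deriv_eq_zero hKc.isPreconnected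
    (fun y hy => (hconst y hy).differentiableAt.differentiableWithinAt)
    (fun y hy => (hconst y hy).deriv) hx hx₀
  simpa [h0, Real.exp_ne_zero] using this

theorem eq_zero_of_mul_pdx_add_mul_eq_zero {I : Set ℝ} (hI : IsOpen I) (hIc : I.OrdConnected)
    {y : ℝ} {g c d : ℝ × ℝ → ℝ} (hg : ∀ x ∈ I, DifferentiableAt ℝ g (x, y))
    (hc : ∀ x ∈ I, ContinuousAt c (x, y)) (hd : ∀ x ∈ I, ContinuousAt d (x, y))
    (hc₀ : ∀ x ∈ I, c (x, y) ≠ 0)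
    (hode : ∀ x ∈ I, c (x, y) * pdx g (x, y) + d (x, y) * g (x, y) = 0)
    {x₀ x : ℝ} (hx₀ : x₀ ∈ I) (h₀ : g (x₀, y) = 0) (hx : x ∈ I) : g (x, y) = 0 := by
  have hslice : Continuous fun t : ℝ => (t, y) := continuous_id.prodMk continuous_const
  refine eqOn_zero_of_hasDerivAt_mul hI hIc (α := fun t => -d (t, y) / c (t, y))
    (u := fun t => g (t, y)) (continuousOn_of_forall_continuousAt fun t ht => ?_)
    (fun t ht => ?_) hx₀ h₀ hx
  · exact ((hd t ht).comp (f := fun t => (t, y)) hslice.continuousAt).neg.div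
      ((hc t ht).comp (f := fun t => (t, y)) hslice.continuousAt) (hc₀ t ht)
  · refine (hg t ht).hasDerivAt_pdx.congr_deriv ?_
    field_simp [hc₀ t ht]
    linear_combination hode t ht

theorem eq_zero_of_mul_pdy_add_mul_eq_zero {J : Set ℝ} (hJ : IsOpen J) (hJc : J.OrdConnected)
    {x : ℝ} {g c d : ℝ × ℝ → ℝ} (hg : ∀ y ∈ J, DifferentiableAt ℝ g (x, y))
    (hc : ∀ y ∈ J, ContinuousAt c (x, y)) (hd : ∀ y ∈ J, ContinuousAt d (x, y))
    (hc₀ : ∀ y ∈ J, c (x, y) ≠ 0)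
    (hode : ∀ y ∈ J, c (x, y) * pdy g (x, y) + d (x, y) * g (x, y) = 0)
    {y₀ y : ℝ} (hy₀ : y₀ ∈ J) (h₀ : g (x, y₀) = 0) (hy : y ∈ J) : g (x, y) = 0 := by
  have hslice : Continuous fun t : ℝ => (x, t) := continuous_const.prodMk continuous_id
  refine eqOn_zero_of_hasDerivAt_mul hJ hJc (α := fun t => -d (x, t) / c (x, t))
    (u := fun t => g (x, t)) (continuousOn_of_forall_continuousAt fun t ht => ?_)
    (fun t ht => ?_) hy₀ h₀ hy
  · exact ((hd t ht).comp (f := fun t => (x, t)) hslice.continuousAt).neg.div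
      ((hc t ht).comp (f := fun t => (x, t)) hslice.continuousAt) (hc₀ t ht)
  · refine (hg t ht).hasDerivAt_pdy.congr_deriv ?_
    field_simp [hc₀ t ht]
    linear_combination hode t ht

theorem eq_of_pdx_eq_zero_of_pdy_eq_zero {I J : Set ℝ} (hI : IsOpen I) (hIc : I.OrdConnected)
    (hJ : IsOpen J) (hJc : J.OrdConnected) {g : ℝ × ℝ → ℝ}
    (hg : ∀ q ∈ I ×ˢ J, DifferentiableAt ℝ g q) (hx : ∀ q ∈ I ×ˢ J, pdx g q = 0)
    (hy : ∀ q ∈ I ×ˢ J, pdy g q = 0) {p p' : ℝ × ℝ} (hp : p ∈ I ×ˢ J) (hp' : p' ∈ I ×ˢ J) :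
    g p = g p' :=
  calc g p = g (p.1, p'.2) :=
        eq_of_pdy_eq_zero hJ hJc (fun _ hy' => hg _ ⟨hp.1, hy'⟩) (fun _ hy' => hy _ ⟨hp.1, hy'⟩)
          hp.2 hp'.2
    _ = g p' :=
        eq_of_pdx_eq_zero hI hIc (fun _ hx' => hg _ ⟨hx', hp'.2⟩) (fun _ hx' => hx _ ⟨hx', hp'.2⟩)
          hp.1 hp'.1

section SamuelsonSystem

variable {U : Set (ℝ × ℝ)} {f b : ℝ × ℝ → ℝ} {p : ℝ × ℝ}
  {s s' : (ℝ × ℝ → ℝ) × (ℝ × ℝ → ℝ) × (ℝ × ℝ → ℝ)}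

def IsSamuelsonHomAt (f b : ℝ × ℝ → ℝ) (s : (ℝ × ℝ → ℝ) × (ℝ × ℝ → ℝ) × (ℝ × ℝ → ℝ))
    (p : ℝ × ℝ) : Prop :=
  pdx f p * pdy s.1 p = 0 ∧ pdy f p * pdx s.2.1 p = 0 ∧
    pdy f p * pdx s.2.2 p - pdx f p * pdy s.2.2 p = 0 ∧
    b p * pdy f p * pdx s.1 p + (b p - 1) * pdx f p * pdy s.2.2 p + pdx f p * pdy s.2.1 p = 0

def IsSamuelsonAt (f b : ℝ × ℝ → ℝ) (s : (ℝ × ℝ → ℝ) × (ℝ × ℝ → ℝ) × (ℝ × ℝ → ℝ))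
    (p : ℝ × ℝ) : Prop :=
  pdx f p * pdy s.1 p + pdy (pdx f) p = 0 ∧ pdy f p * pdx s.2.1 p + pdy (pdx f) p = 0 ∧
    pdy f p * pdx s.2.2 p - pdx f p * pdy s.2.2 p = 0 ∧
    b p * pdy f p * pdx s.1 p + (b p - 1) * pdx f p * pdy s.2.2 p + pdx f p * pdy s.2.1 p
      + 2 * b p * pdy (pdx f) p + pdx b p * pdy f p = 0

theorem IsSamuelsonAt.sub (h : IsSamuelsonAt f b s p) (h' : IsSamuelsonAt f b s' p)
    (hs₁ : DifferentiableAt ℝ s.1 p) (hs₂ : DifferentiableAt ℝ s.2.1 p)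
    (hs₃ : DifferentiableAt ℝ s.2.2 p) (hs₁' : DifferentiableAt ℝ s'.1 p)
    (hs₂' : DifferentiableAt ℝ s'.2.1 p) (hs₃' : DifferentiableAt ℝ s'.2.2 p) :
    IsSamuelsonHomAt f b (s - s') p := by
  obtain ⟨e₁, e₂, e₃, e₄⟩ := h
  obtain ⟨e₁', e₂', e₃', e₄'⟩ := h'
  simp only [IsSamuelsonHomAt, Prod.fst_sub, Prod.snd_sub, pdx_sub, pdy_sub, hs₁, hs₂, hs₃, hs₁',
    hs₂', hs₃']
  exact ⟨by linear_combination e₁ - e₁', by linear_combination e₂ - e₂',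
    by linear_combination e₃ - e₃', by linear_combination e₄ - e₄'⟩

theorem IsSamuelsonHomAt.add {t : (ℝ × ℝ → ℝ) × (ℝ × ℝ → ℝ) × (ℝ × ℝ → ℝ)}
    (h : IsSamuelsonHomAt f b s p) (h' : IsSamuelsonHomAt f b t p)
    (hs₁ : DifferentiableAt ℝ s.1 p) (hs₂ : DifferentiableAt ℝ s.2.1 p)
    (hs₃ : DifferentiableAt ℝ s.2.2 p) (ht₁ : DifferentiableAt ℝ t.1 p)
    (ht₂ : DifferentiableAt ℝ t.2.1 p) (ht₃ : DifferentiableAt ℝ t.2.2 p) :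
    IsSamuelsonHomAt f b (s + t) p := by
  obtain ⟨e₁, e₂, e₃, e₄⟩ := h
  obtain ⟨e₁', e₂', e₃', e₄'⟩ := h'
  simp only [IsSamuelsonHomAt, Prod.fst_add, Prod.snd_add, pdx_add, pdy_add, hs₁, hs₂, hs₃, ht₁,
    ht₂, ht₃]
  exact ⟨by linear_combination e₁ + e₁', by linear_combination e₂ + e₂',
    by linear_combination e₃ + e₃', by linear_combination e₄ + e₄'⟩

theorem IsSamuelsonHomAt.const_smul (h : IsSamuelsonHomAt f b s p) (c : ℝ)
    (hs₁ : DifferentiableAt ℝ s.1 p) (hs₂ : DifferentiableAt ℝ s.2.1 p)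
    (hs₃ : DifferentiableAt ℝ s.2.2 p) : IsSamuelsonHomAt f b (c • s) p := by
  obtain ⟨e₁, e₂, e₃, e₄⟩ := h
  simp only [IsSamuelsonHomAt, Prod.smul_fst, Prod.smul_snd, pdx_const_smul, pdy_const_smul, hs₁,
    hs₂, hs₃]
  exact ⟨by linear_combination c * e₁, by linear_combination c * e₂,
    by linear_combination c * e₃, by linear_combination c * e₄⟩

-- Smoothness is asked at each point of `U` rather than as `ContDiffOn`, so that partial
-- derivatives at points of `U` are additive without `U` being open.
def samuelsonHomSolutions (U : Set (ℝ × ℝ)) (f b : ℝ × ℝ → ℝ) :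
    Submodule ℝ ((ℝ × ℝ → ℝ) × (ℝ × ℝ → ℝ) × (ℝ × ℝ → ℝ)) where
  carrier := {s | ∀ p ∈ U, (ContDiffAt ℝ ∞ s.1 p ∧ ContDiffAt ℝ ∞ s.2.1 p ∧
    ContDiffAt ℝ ∞ s.2.2 p) ∧ IsSamuelsonHomAt f b s p}
  zero_mem' _ _ := ⟨⟨contDiffAt_const, contDiffAt_const, contDiffAt_const⟩,
    by simp [IsSamuelsonHomAt, pdx, pdy]⟩
  add_mem' hs ht p hp := by
    obtain ⟨⟨hs₁, hs₂, hs₃⟩, hs⟩ := hs p hp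
    obtain ⟨⟨ht₁, ht₂, ht₃⟩, ht⟩ := ht p hp
    exact ⟨⟨hs₁.add ht₁, hs₂.add ht₂, hs₃.add ht₃⟩, hs.add ht (hs₁.differentiableAt (by simp))
      (hs₂.differentiableAt (by simp)) (hs₃.differentiableAt (by simp))
      (ht₁.differentiableAt (by simp)) (ht₂.differentiableAt (by simp))
      (ht₃.differentiableAt (by simp))⟩
  smul_mem' c s hs p hp := by
    obtain ⟨⟨hs₁, hs₂, hs₃⟩, hs⟩ := hs p hp
    exact ⟨⟨hs₁.const_smul c, hs₂.const_smul c, hs₃.const_smul c⟩, hs.const_smul c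
      (hs₁.differentiableAt (by simp)) (hs₂.differentiableAt (by simp))
      (hs₃.differentiableAt (by simp))⟩

end SamuelsonSystem

noncomputable def integrabilityCoeffσ₁ (f b : ℝ × ℝ → ℝ) (p : ℝ × ℝ) : ℝ :=
  pdy f p ^ 2 * (pdx b p * pdx f p * pdy f p - pdy b p * pdx f p ^ 2
    + b p * (b p - 1) * (pdy f p * pdx (pdx f) p - pdx f p * pdy (pdx f) p))

noncomputable def integrabilityCoeffσ₂ (f b : ℝ × ℝ → ℝ) (p : ℝ × ℝ) : ℝ :=
  pdx f p ^ 2 * (pdx b p * pdy f p ^ 2 - pdy b p * pdx f p * pdy f p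
    + (b p - 1) * (pdy f p * pdy (pdx f) p - pdx f p * pdy (pdy f) p))

theorem continuousAt_integrabilityCoeffσ₁ {f b : ℝ × ℝ → ℝ} {p : ℝ × ℝ}
    (hf : ContDiffAt ℝ ∞ f p) (hb : ContDiffAt ℝ ∞ b p) :
    ContinuousAt (integrabilityCoeffσ₁ f b) p := by
  have := hb.continuousAt
  have := hb.pdx.continuousAt
  have := hb.pdy.continuousAt
  have := hf.pdx.continuousAt
  have := hf.pdy.continuousAt
  have := hf.pdx.pdx.continuousAt
  have := hf.pdx.pdy.continuousAt
  unfold integrabilityCoeffσ₁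
  fun_prop

theorem continuousAt_integrabilityCoeffσ₂ {f b : ℝ × ℝ → ℝ} {p : ℝ × ℝ}
    (hf : ContDiffAt ℝ ∞ f p) (hb : ContDiffAt ℝ ∞ b p) :
    ContinuousAt (integrabilityCoeffσ₂ f b) p := by
  have := hb.continuousAt
  have := hb.pdx.continuousAt
  have := hb.pdy.continuousAt
  have := hf.pdx.continuousAt
  have := hf.pdy.continuousAt
  have := hf.pdx.pdy.continuousAt
  have := hf.pdy.pdy.continuousAt
  unfold integrabilityCoeffσ₂
  fun_prop

section LinearAlgebra

variable {K M N P : Type*} [DivisionRing K] [AddCommGroup M] [Module K M] [AddCommGroup N]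
  [Module K N] [AddCommGroup P] [Module K P] [FiniteDimensional K P]
  {φ : M →ₗ[K] N} {ψ : M →ₗ[K] P}

theorem LinearMap.finiteDimensional_range_of_ker_le (h : ker ψ ≤ ker φ) :
    FiniteDimensional K (range φ) := by
  have : FiniteDimensional K (M ⧸ ker ψ) := ψ.quotKerEquivRange.symm.finiteDimensional
  exact Submodule.range_liftQ (ker ψ) φ h ▸ LinearMap.finiteDimensional_range _

theorem LinearMap.finrank_range_le_of_ker_le (h : ker ψ ≤ ker φ) :
    Module.finrank K (range φ) ≤ Module.finrank K P := by
  have : FiniteDimensional K (M ⧸ ker ψ) := ψ.quotKerEquivRange.symm.finiteDimensional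
  calc Module.finrank K (range φ) = Module.finrank K (range ((ker ψ).liftQ φ h)) := by
        rw [Submodule.range_liftQ]
    _ ≤ Module.finrank K (M ⧸ ker ψ) := LinearMap.finrank_range_le _
    _ = Module.finrank K (range ψ) := ψ.quotKerEquivRange.finrank_eq
    _ ≤ Module.finrank K P := Submodule.finrank_le _

end LinearAlgebra

def restrictTriple (U : Set (ℝ × ℝ)) :
    ((ℝ × ℝ → ℝ) × (ℝ × ℝ → ℝ) × (ℝ × ℝ → ℝ)) →ₗ[ℝ] (U → ℝ) × (U → ℝ) × (U → ℝ) :=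
  (LinearMap.funLeft ℝ ℝ Subtype.val).prodMap
    ((LinearMap.funLeft ℝ ℝ Subtype.val).prodMap (LinearMap.funLeft ℝ ℝ Subtype.val))

theorem restrictTriple_eq_zero {U : Set (ℝ × ℝ)} {s : (ℝ × ℝ → ℝ) × (ℝ × ℝ → ℝ) × (ℝ × ℝ → ℝ)}
    (h₁ : EqOn s.1 0 U) (h₂ : EqOn s.2.1 0 U) (h₃ : EqOn s.2.2 0 U) : restrictTriple U s = 0 :=
  Prod.ext (funext fun q => h₁ q.2) (Prod.ext (funext fun q => h₂ q.2) (funext fun q => h₃ q.2))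

noncomputable def samuelsonJet (p₀ : ℝ × ℝ) (s : (ℝ × ℝ → ℝ) × (ℝ × ℝ → ℝ) × (ℝ × ℝ → ℝ)) :
    ℝ × ℝ × ℝ × ℝ × ℝ × ℝ :=
  (s.1 p₀, s.2.1 p₀, s.2.2 p₀, pdx s.1 p₀, pdy s.2.1 p₀, pdy (pdy s.2.1) p₀)

namespace samuelsonHomSolutions

variable {U : Set (ℝ × ℝ)} {I J : Set ℝ} {f b : ℝ × ℝ → ℝ} {p p₀ : ℝ × ℝ} {x₀ y₀ : ℝ}
  {s : (ℝ × ℝ → ℝ) × (ℝ × ℝ → ℝ) × (ℝ × ℝ → ℝ)}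

theorem pdy_fst_eq_zero (hs : s ∈ samuelsonHomSolutions U f b) (hfx : ∀ q ∈ U, pdx f q ≠ 0)
    (hp : p ∈ U) : pdy s.1 p = 0 :=
  (mul_eq_zero.mp (hs p hp).2.1).resolve_left (hfx p hp)

theorem pdx_snd_eq_zero (hs : s ∈ samuelsonHomSolutions U f b) (hfy : ∀ q ∈ U, pdy f q ≠ 0)
    (hp : p ∈ U) : pdx s.2.1 p = 0 :=
  (mul_eq_zero.mp (hs p hp).2.2.1).resolve_left (hfy p hp)

theorem pdy_pdx_fst_eq_zero (hU : IsOpen U) (hs : s ∈ samuelsonHomSolutions U f b)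
    (hfx : ∀ q ∈ U, pdx f q ≠ 0) (hp : p ∈ U) : pdy (pdx s.1) p = 0 :=
  (pdy_pdx_comm (hs p hp).1.1).trans <|
    pdx_eq_zero_of_eqOn_zero hU (fun _ hq => pdy_fst_eq_zero hs hfx hq) hp

theorem pdx_pdy_snd_eq_zero (hU : IsOpen U) (hs : s ∈ samuelsonHomSolutions U f b)
    (hfy : ∀ q ∈ U, pdy f q ≠ 0) (hp : p ∈ U) : pdx (pdy s.2.1) p = 0 :=
  (pdy_pdx_comm (hs p hp).1.2.1).symm.trans <|
    pdy_eq_zero_of_eqOn_zero hU (fun _ hq => pdx_snd_eq_zero hs hfy hq) hp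

theorem pdx_pdy_pdy_snd_eq_zero (hU : IsOpen U) (hs : s ∈ samuelsonHomSolutions U f b)
    (hfy : ∀ q ∈ U, pdy f q ≠ 0) (hp : p ∈ U) : pdx (pdy (pdy s.2.1)) p = 0 :=
  (pdy_pdx_comm (hs p hp).1.2.1.pdy).symm.trans <|
    pdy_eq_zero_of_eqOn_zero hU (fun _ hq => pdx_pdy_snd_eq_zero hU hs hfy hq) hp

theorem integrability_condition (hU : IsOpen U) (hs : s ∈ samuelsonHomSolutions U f b)
    (hfx : ∀ q ∈ U, pdx f q ≠ 0) (hfy : ∀ q ∈ U, pdy f q ≠ 0) (hf : ContDiffAt ℝ ∞ f p)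
    (hb : ContDiffAt ℝ ∞ b p) (hp : p ∈ U) :
    -(b p * (b p - 1) * pdx f p * pdy f p ^ 3) * pdx (pdx s.1) p
      + (b p - 1) * pdx f p ^ 3 * pdy f p * pdy (pdy s.2.1) p
      + integrabilityCoeffσ₁ f b p * pdx s.1 p + integrabilityCoeffσ₂ f b p * pdy s.2.1 p = 0 := by
  obtain ⟨⟨hs₁, hs₂, hs₃⟩, -, -, e₃, e₄⟩ := hs p hp
  have e₄x : pdx (b * pdy f * pdx s.1 + (b - 1) * pdx f * pdy s.2.2 + pdx f * pdy s.2.1) p = 0 :=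
    pdx_eq_zero_of_eqOn_zero hU (fun q hq => (hs q hq).2.2.2.2) hp
  have e₄y : pdy (b * pdy f * pdx s.1 + (b - 1) * pdx f * pdy s.2.2 + pdx f * pdy s.2.1) p = 0 :=
    pdy_eq_zero_of_eqOn_zero hU (fun q hq => (hs q hq).2.2.2.2) hp
  have e₃y : pdy (pdy f * pdx s.2.2 - pdx f * pdy s.2.2) p = 0 :=
    pdy_eq_zero_of_eqOn_zero hU (fun q hq => (hs q hq).2.2.2.1) hp
  have := hb.differentiableAt (by simp)
  have := hf.pdx.differentiableAt (by simp)
  have := hf.pdy.differentiableAt (by simp)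
  have := hs₁.pdx.differentiableAt (by simp)
  have := hs₂.pdy.differentiableAt (by simp)
  have := hs₃.pdx.differentiableAt (by simp)
  have := hs₃.pdy.differentiableAt (by simp)
  simp (disch := fun_prop) only [pdx_add, pdx_sub, pdx_mul, pdy_add, pdy_sub, pdy_mul, Pi.one_def,
    pdx_const, pdy_const, Pi.mul_apply, Pi.sub_apply] at e₄x e₄y e₃y
  rw [pdx_pdy_snd_eq_zero hU hs hfy hp, ← pdy_pdx_comm hf] at e₄x
  rw [pdy_pdx_fst_eq_zero hU hs hfx hp] at e₄y
  rw [pdy_pdx_comm hs₃] at e₃y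
  unfold integrabilityCoeffσ₁ integrabilityCoeffσ₂
  -- eliminate `∂ₓ∂ᵧτ₁` and `∂ᵧ∂ᵧτ₁`, then `∂ₓτ₁` by (E3), then `∂ᵧτ₁` by (E4)
  linear_combination (b p - 1) * pdx f p * pdy f p * ((b p - 1) * pdx f p * e₃y
      - pdy f p * e₄x + pdx f p * e₄y)
    - (b p - 1) ^ 2 * pdx f p ^ 2 * pdy (pdy f) p * e₃
    - (pdy f p * (pdy b p * pdx f p ^ 2 - pdx b p * pdx f p * pdy f p
      - (b p - 1) * pdy f p * pdx (pdx f) p) + (b p - 1) * pdx f p ^ 2 * pdy (pdy f) p) * e₄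

theorem pdx_fst_eqOn_zero (hI : IsOpen I) (hIc : I.OrdConnected) (hJ : IsOpen J)
    (hJc : J.OrdConnected) (hs : s ∈ samuelsonHomSolutions (I ×ˢ J) f b)
    (hf : ∀ q ∈ I ×ˢ J, ContDiffAt ℝ ∞ f q) (hb : ∀ q ∈ I ×ˢ J, ContDiffAt ℝ ∞ b q)
    (hfx : ∀ q ∈ I ×ˢ J, pdx f q ≠ 0) (hfy : ∀ q ∈ I ×ˢ J, pdy f q ≠ 0)
    (hb0 : ∀ q ∈ I ×ˢ J, b q ≠ 0) (hb1 : ∀ q ∈ I ×ˢ J, b q ≠ 1) (hp₀ : (x₀, y₀) ∈ I ×ˢ J)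
    (hu₀ : pdx s.1 (x₀, y₀) = 0) (hv₀ : pdy s.2.1 (x₀, y₀) = 0)
    (hv'₀ : pdy (pdy s.2.1) (x₀, y₀) = 0) :
    EqOn (pdx s.1) 0 (I ×ˢ J) := by
  have hU : IsOpen (I ×ˢ J) := hI.prod hJ
  obtain ⟨hx₀, hy₀⟩ := hp₀
  have hv : ∀ x ∈ I, pdy s.2.1 (x, y₀) = 0 := fun x hx =>
    (eq_of_pdx_eq_zero hI hIc
      (fun t ht => (hs (t, y₀) ⟨ht, hy₀⟩).1.2.1.pdy.differentiableAt (by simp))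
      (fun t ht => pdx_pdy_snd_eq_zero hU hs hfy ⟨ht, hy₀⟩) hx hx₀).trans hv₀
  have hv' : ∀ x ∈ I, pdy (pdy s.2.1) (x, y₀) = 0 := fun x hx =>
    (eq_of_pdx_eq_zero hI hIc
      (fun t ht => (hs (t, y₀) ⟨ht, hy₀⟩).1.2.1.pdy.pdy.differentiableAt (by simp))
      (fun t ht => pdx_pdy_pdy_snd_eq_zero hU hs hfy ⟨ht, hy₀⟩) hx hx₀).trans hv'₀
  have hline : ∀ x ∈ I, pdx s.1 (x, y₀) = 0 := by
    refine fun x hx => eq_zero_of_mul_pdx_add_mul_eq_zero hI hIc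
      (c := fun q => -(b q * (b q - 1) * pdx f q * pdy f q ^ 3)) (d := integrabilityCoeffσ₁ f b)
      (fun t ht => (hs (t, y₀) ⟨ht, hy₀⟩).1.1.pdx.differentiableAt (by simp)) (fun t ht => ?_)
      (fun t ht => continuousAt_integrabilityCoeffσ₁ (hf (t, y₀) ⟨ht, hy₀⟩) (hb (t, y₀) ⟨ht, hy₀⟩))
      (fun t ht => ?_) (fun t ht => ?_) hx₀ hu₀ hx
    · have hp : (t, y₀) ∈ I ×ˢ J := ⟨ht, hy₀⟩
      have := (hb _ hp).continuousAt
      have := (hf _ hp).pdx.continuousAt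
      have := (hf _ hp).pdy.continuousAt
      fun_prop
    · have hp : (t, y₀) ∈ I ×ˢ J := ⟨ht, hy₀⟩
      exact neg_ne_zero.2 <| mul_ne_zero (mul_ne_zero (mul_ne_zero (hb0 _ hp)
        (sub_ne_zero.2 (hb1 _ hp))) (hfx _ hp)) (pow_ne_zero 3 (hfy _ hp))
    · have hp : (t, y₀) ∈ I ×ˢ J := ⟨ht, hy₀⟩
      simpa [hv t ht, hv' t ht] using integrability_condition hU hs hfx hfy (hf _ hp) (hb _ hp) hp
  intro q hq
  exact (eq_of_pdy_eq_zero hJ hJc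
    (fun t ht => (hs (q.1, t) ⟨hq.1, ht⟩).1.1.pdx.differentiableAt (by simp))
    (fun t ht => pdy_pdx_fst_eq_zero hU hs hfx ⟨hq.1, ht⟩) hq.2 hy₀).trans (hline q.1 hq.1)

theorem pdy_snd_eqOn_zero (hI : IsOpen I) (hIc : I.OrdConnected) (hJ : IsOpen J)
    (hJc : J.OrdConnected) (hs : s ∈ samuelsonHomSolutions (I ×ˢ J) f b)
    (hf : ∀ q ∈ I ×ˢ J, ContDiffAt ℝ ∞ f q) (hb : ∀ q ∈ I ×ˢ J, ContDiffAt ℝ ∞ b q)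
    (hfx : ∀ q ∈ I ×ˢ J, pdx f q ≠ 0) (hfy : ∀ q ∈ I ×ˢ J, pdy f q ≠ 0)
    (hb1 : ∀ q ∈ I ×ˢ J, b q ≠ 1) (hp₀ : (x₀, y₀) ∈ I ×ˢ J) (hu : EqOn (pdx s.1) 0 (I ×ˢ J))
    (hv₀ : pdy s.2.1 (x₀, y₀) = 0) :
    EqOn (pdy s.2.1) 0 (I ×ˢ J) := by
  have hU : IsOpen (I ×ˢ J) := hI.prod hJ
  obtain ⟨hx₀, hy₀⟩ := hp₀
  have hline : ∀ y ∈ J, pdy s.2.1 (x₀, y) = 0 := by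
    refine fun y hy => eq_zero_of_mul_pdy_add_mul_eq_zero hJ hJc
      (c := fun q => (b q - 1) * pdx f q ^ 3 * pdy f q) (d := integrabilityCoeffσ₂ f b)
      (fun t ht => (hs (x₀, t) ⟨hx₀, ht⟩).1.2.1.pdy.differentiableAt (by simp)) (fun t ht => ?_)
      (fun t ht => continuousAt_integrabilityCoeffσ₂ (hf (x₀, t) ⟨hx₀, ht⟩) (hb (x₀, t) ⟨hx₀, ht⟩))
      (fun t ht => ?_) (fun t ht => ?_) hy₀ hv₀ hy
    · have hp : (x₀, t) ∈ I ×ˢ J := ⟨hx₀, ht⟩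
      have := (hb _ hp).continuousAt
      have := (hf _ hp).pdx.continuousAt
      have := (hf _ hp).pdy.continuousAt
      fun_prop
    · have hp : (x₀, t) ∈ I ×ˢ J := ⟨hx₀, ht⟩
      exact mul_ne_zero (mul_ne_zero (sub_ne_zero.2 (hb1 _ hp)) (pow_ne_zero 3 (hfx _ hp)))
        (hfy _ hp)
    · have hp : (x₀, t) ∈ I ×ˢ J := ⟨hx₀, ht⟩
      simpa [hu hp, pdx_eq_zero_of_eqOn_zero hU hu hp] using
        integrability_condition hU hs hfx hfy (hf _ hp) (hb _ hp) hp
  intro q hq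
  exact (eq_of_pdx_eq_zero hI hIc
    (fun t ht => (hs (t, q.2) ⟨ht, hq.2⟩).1.2.1.pdy.differentiableAt (by simp))
    (fun t ht => pdx_pdy_snd_eq_zero hU hs hfy ⟨ht, hq.2⟩) hq.1 hx₀).trans (hline q.2 hq.2)

theorem eqOn_zero_of_samuelsonJet_eq_zero (hI : IsOpen I) (hIc : I.OrdConnected) (hJ : IsOpen J)
    (hJc : J.OrdConnected) (hs : s ∈ samuelsonHomSolutions (I ×ˢ J) f b)
    (hf : ∀ q ∈ I ×ˢ J, ContDiffAt ℝ ∞ f q) (hb : ∀ q ∈ I ×ˢ J, ContDiffAt ℝ ∞ b q)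
    (hfx : ∀ q ∈ I ×ˢ J, pdx f q ≠ 0) (hfy : ∀ q ∈ I ×ˢ J, pdy f q ≠ 0)
    (hb0 : ∀ q ∈ I ×ˢ J, b q ≠ 0) (hb1 : ∀ q ∈ I ×ˢ J, b q ≠ 1) (hp₀ : p₀ ∈ I ×ˢ J)
    (hjet : samuelsonJet p₀ s = 0) :
    EqOn s.1 0 (I ×ˢ J) ∧ EqOn s.2.1 0 (I ×ˢ J) ∧ EqOn s.2.2 0 (I ×ˢ J) := by
  simp only [samuelsonJet, Prod.mk_eq_zero] at hjet
  obtain ⟨hσ₁, hσ₂, hτ₁, hu₀, hv₀, hv'₀⟩ := hjet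
  have hu := pdx_fst_eqOn_zero hI hIc hJ hJc hs hf hb hfx hfy hb0 hb1 hp₀ hu₀ hv₀ hv'₀
  have hv := pdy_snd_eqOn_zero hI hIc hJ hJc hs hf hb hfx hfy hb1 hp₀ hu hv₀
  have hQ : EqOn (pdy s.2.2) 0 (I ×ˢ J) := fun q hq => by
    have e₄ := (hs q hq).2.2.2.2
    rw [hu hq, hv hq] at e₄
    simpa [sub_eq_zero, hb1 q hq, hfx q hq] using e₄
  have hP : EqOn (pdx s.2.2) 0 (I ×ˢ J) := fun q hq => by
    have e₃ := (hs q hq).2.2.2.1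
    rw [hQ hq] at e₃
    simpa [hfy q hq] using e₃
  have hconst {g : ℝ × ℝ → ℝ} (hg : ∀ q ∈ I ×ˢ J, ContDiffAt ℝ ∞ g q)
      (hx : EqOn (pdx g) 0 (I ×ˢ J)) (hy : EqOn (pdy g) 0 (I ×ˢ J)) {q : ℝ × ℝ}
      (hq : q ∈ I ×ˢ J) : g q = g p₀ :=
    eq_of_pdx_eq_zero_of_pdy_eq_zero hI hIc hJ hJc
      (fun q hq => (hg q hq).differentiableAt (by simp)) hx hy hq hp₀
  refine ⟨fun q hq => ?_, fun q hq => ?_, fun q hq => ?_⟩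
  · exact (hconst (fun q hq => (hs q hq).1.1) hu
      (fun _ hq => pdy_fst_eq_zero hs hfx hq) hq).trans hσ₁
  · exact (hconst (fun q hq => (hs q hq).1.2.1)
      (fun _ hq => pdx_snd_eq_zero hs hfy hq) hv hq).trans hσ₂
  · exact (hconst (fun q hq => (hs q hq).1.2.2) hP hQ hq).trans hτ₁

noncomputable def jet (hp₀ : p₀ ∈ U) : samuelsonHomSolutions U f b →ₗ[ℝ] ℝ × ℝ × ℝ × ℝ × ℝ × ℝ where
  toFun s := samuelsonJet p₀ s
  map_add' s t := by
    obtain ⟨⟨hs₁, hs₂, -⟩, -⟩ := s.2 p₀ hp₀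
    obtain ⟨⟨ht₁, ht₂, -⟩, -⟩ := t.2 p₀ hp₀
    simp only [samuelsonJet, Submodule.coe_add, Prod.fst_add, Prod.snd_add, Pi.add_apply,
      Prod.mk_add_mk, pdx_add (hs₁.differentiableAt (by simp)) (ht₁.differentiableAt (by simp)),
      pdy_add (hs₂.differentiableAt (by simp)) (ht₂.differentiableAt (by simp)),
      pdy_pdy_add hs₂ ht₂]
  map_smul' c s := by
    obtain ⟨⟨hs₁, hs₂, -⟩, -⟩ := s.2 p₀ hp₀
    simp only [samuelsonJet, Submodule.coe_smul, Prod.smul_fst, Prod.smul_snd, Pi.smul_apply,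
      Prod.smul_mk, smul_eq_mul, RingHom.id_apply, pdx_const_smul (hs₁.differentiableAt (by simp)),
      pdy_const_smul (hs₂.differentiableAt (by simp)), pdy_pdy_const_smul hs₂]

theorem exists_ker_le_ker_restrictTriple (hI : IsOpen I) (hIc : I.OrdConnected) (hJ : IsOpen J)
    (hJc : J.OrdConnected) (hf : ∀ q ∈ I ×ˢ J, ContDiffAt ℝ ∞ f q)
    (hb : ∀ q ∈ I ×ˢ J, ContDiffAt ℝ ∞ b q) (hfx : ∀ q ∈ I ×ˢ J, pdx f q ≠ 0)
    (hfy : ∀ q ∈ I ×ˢ J, pdy f q ≠ 0) (hb0 : ∀ q ∈ I ×ˢ J, b q ≠ 0)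
    (hb1 : ∀ q ∈ I ×ˢ J, b q ≠ 1) :
    ∃ j : samuelsonHomSolutions (I ×ˢ J) f b →ₗ[ℝ] ℝ × ℝ × ℝ × ℝ × ℝ × ℝ, LinearMap.ker j ≤
      LinearMap.ker (restrictTriple (I ×ˢ J) ∘ₗ (samuelsonHomSolutions (I ×ˢ J) f b).subtype) := by
  rcases (I ×ˢ J).eq_empty_or_nonempty with hU | ⟨p₀, hp₀⟩
  · refine ⟨0, fun s _ => ?_⟩
    exact restrictTriple_eq_zero (by simp [hU]) (by simp [hU]) (by simp [hU])
  · refine ⟨jet hp₀, fun s hs => ?_⟩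
    obtain ⟨h₁, h₂, h₃⟩ := eqOn_zero_of_samuelsonJet_eq_zero hI hIc hJ hJc s.2 hf hb hfx hfy hb0 hb1
      hp₀ hs
    exact restrictTriple_eq_zero h₁ h₂ h₃

end samuelsonHomSolutions

/-- (Theorem 1: the rank of a Samuelson web does not exceed 6.)
For the Samuelson system (E1)–(E4) in cleared coordinate form, the solutions of
the associated homogeneous system form (after restriction to `U`) a real vector
space of dimension at most `6`; consequently differences of any two solutions of
the inhomogeneous system (E1)–(E4) also lie in this space, so the solution set,
if nonempty, is an affine subspace of dimension at most `6`. -/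
theorem samuelson_rank_le_six
    (I J : Set ℝ) (hI : IsOpen I) (hJ : IsOpen J)
    (hIc : I.OrdConnected) (hJc : J.OrdConnected)
    (f : ℝ × ℝ → ℝ) (hf : ContDiffOn ℝ (⊤ : ℕ∞) f (I ×ˢ J))
    (hfx : ∀ p ∈ I ×ˢ J, pdx f p ≠ 0) (hfy : ∀ p ∈ I ×ˢ J, pdy f p ≠ 0)
    (b : ℝ × ℝ → ℝ) (hb : ContDiffOn ℝ (⊤ : ℕ∞) b (I ×ˢ J))
    (hb0 : ∀ p ∈ I ×ˢ J, b p ≠ 0) (hb1 : ∀ p ∈ I ×ˢ J, b p ≠ 1) :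
    ∃ S : Submodule ℝ (((I ×ˢ J : Set (ℝ × ℝ)) → ℝ) × ((I ×ˢ J : Set (ℝ × ℝ)) → ℝ)
        × ((I ×ˢ J : Set (ℝ × ℝ)) → ℝ)),
      FiniteDimensional ℝ S ∧ Module.finrank ℝ S ≤ 6 ∧
      (∀ σ₁ σ₂ τ₁ : ℝ × ℝ → ℝ,
        ContDiffOn ℝ (⊤ : ℕ∞) σ₁ (I ×ˢ J) → ContDiffOn ℝ (⊤ : ℕ∞) σ₂ (I ×ˢ J) →
        ContDiffOn ℝ (⊤ : ℕ∞) τ₁ (I ×ˢ J) →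
        (∀ p ∈ I ×ˢ J,
          pdx f p * pdy σ₁ p = 0 ∧
          pdy f p * pdx σ₂ p = 0 ∧
          pdy f p * pdx τ₁ p - pdx f p * pdy τ₁ p = 0 ∧
          b p * pdy f p * pdx σ₁ p + (b p - 1) * pdx f p * pdy τ₁ p
            + pdx f p * pdy σ₂ p = 0) →
        (fun u : (I ×ˢ J : Set (ℝ × ℝ)) => σ₁ u,
         fun u : (I ×ˢ J : Set (ℝ × ℝ)) => σ₂ u,
         fun u : (I ×ˢ J : Set (ℝ × ℝ)) => τ₁ u) ∈ S) ∧
      (∀ σ₁ σ₂ τ₁ σ₁' σ₂' τ₁' : ℝ × ℝ → ℝ,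
        ContDiffOn ℝ (⊤ : ℕ∞) σ₁ (I ×ˢ J) → ContDiffOn ℝ (⊤ : ℕ∞) σ₂ (I ×ˢ J) →
        ContDiffOn ℝ (⊤ : ℕ∞) τ₁ (I ×ˢ J) →
        ContDiffOn ℝ (⊤ : ℕ∞) σ₁' (I ×ˢ J) → ContDiffOn ℝ (⊤ : ℕ∞) σ₂' (I ×ˢ J) →
        ContDiffOn ℝ (⊤ : ℕ∞) τ₁' (I ×ˢ J) →
        (∀ p ∈ I ×ˢ J,
          pdx f p * pdy σ₁ p + pdy (pdx f) p = 0 ∧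
          pdy f p * pdx σ₂ p + pdy (pdx f) p = 0 ∧
          pdy f p * pdx τ₁ p - pdx f p * pdy τ₁ p = 0 ∧
          b p * pdy f p * pdx σ₁ p + (b p - 1) * pdx f p * pdy τ₁ p
            + pdx f p * pdy σ₂ p + 2 * b p * pdy (pdx f) p + pdx b p * pdy f p = 0) →
        (∀ p ∈ I ×ˢ J,
          pdx f p * pdy σ₁' p + pdy (pdx f) p = 0 ∧
          pdy f p * pdx σ₂' p + pdy (pdx f) p = 0 ∧
          pdy f p * pdx τ₁' p - pdx f p * pdy τ₁' p = 0 ∧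
          b p * pdy f p * pdx σ₁' p + (b p - 1) * pdx f p * pdy τ₁' p
            + pdx f p * pdy σ₂' p + 2 * b p * pdy (pdx f) p + pdx b p * pdy f p = 0) →
        (fun u : (I ×ˢ J : Set (ℝ × ℝ)) => σ₁ u - σ₁' u,
         fun u : (I ×ˢ J : Set (ℝ × ℝ)) => σ₂ u - σ₂' u,
         fun u : (I ×ˢ J : Set (ℝ × ℝ)) => τ₁ u - τ₁' u) ∈ S) := by
  have hU : IsOpen (I ×ˢ J) := hI.prod hJ
  have smooth : ∀ {g : ℝ × ℝ → ℝ}, ContDiffOn ℝ (⊤ : ℕ∞) g (I ×ˢ J) →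
      ∀ q ∈ I ×ˢ J, ContDiffAt ℝ ∞ g q :=
    fun hg q hq => hg.contDiffAt (hU.mem_nhds hq)
  have diff : ∀ {g : ℝ × ℝ → ℝ}, ContDiffOn ℝ (⊤ : ℕ∞) g (I ×ˢ J) →
      ∀ q ∈ I ×ˢ J, DifferentiableAt ℝ g q :=
    fun hg q hq => (smooth hg q hq).differentiableAt (by simp)
  obtain ⟨j, hj⟩ := samuelsonHomSolutions.exists_ker_le_ker_restrictTriple hI hIc hJ hJc
    (smooth hf) (smooth hb) hfx hfy hb0 hb1
  refine ⟨_, LinearMap.finiteDimensional_range_of_ker_le hj,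
    (LinearMap.finrank_range_le_of_ker_le hj).trans (by simp), ?_, ?_⟩
  · intro σ₁ σ₂ τ₁ h₁ h₂ h₃ hsys
    exact ⟨⟨(σ₁, σ₂, τ₁), fun q hq =>
      ⟨⟨smooth h₁ q hq, smooth h₂ q hq, smooth h₃ q hq⟩, hsys q hq⟩⟩, rfl⟩
  · intro σ₁ σ₂ τ₁ σ₁' σ₂' τ₁' h₁ h₂ h₃ h₁' h₂' h₃' hsys hsys'
    exact ⟨⟨(σ₁, σ₂, τ₁) - (σ₁', σ₂', τ₁'), fun q hq =>
      ⟨⟨(smooth h₁ q hq).sub (smooth h₁' q hq), (smooth h₂ q hq).sub (smooth h₂' q hq),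
        (smooth h₃ q hq).sub (smooth h₃' q hq)⟩,
      IsSamuelsonAt.sub (hsys q hq) (hsys' q hq) (diff h₁ q hq) (diff h₂ q hq) (diff h₃ q hq)
        (diff h₁' q hq) (diff h₂' q hq) (diff h₃' q hq)⟩⟩, rfl⟩
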